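/- arXiv:1607.02914 — 2 statements merged into one kernel-verified Lean document; each statement's English description precedes it below -/
import Mathlib

section
/- Assume q*(x) = N(x | 0, Σ) with non-singular p×p covariance matrix Σ, p*(y|x) = N(y | xᵀθ*, σ²) and p_θ(y|x) = N(y | xᵀθ, σ²). Let λ ∈ (0,1), θ̄ = θ − θ*, θ̄' = Σ^{1/2} θ̄, c = σ²/(λ(1−λ)), and let q^λ_θ(x) be the x-marginal of the tilted distribution p̄^λ_θ(x,y) ∝ q*(x) p*(y|x)^λ p_θ(y|x)^{1−λ}. Then: (i) q^λ_θ = N(0, Σ^λ_θ) with Σ^λ_θ = Σ − Σ^{1/2} θ̄' θ̄'ᵀ Σ^{1/2} / ( c + ‖θ̄'‖₂² ); (ii) ∂ d_λ(p*,p_θ)/∂θ = (λ/σ²)( c/(c+‖θ̄'‖₂²) ) Σ^{1/2} θ̄'; (iii) ∂² d_λ(p*,p_θ)/∂θ∂θᵀ = (λ/σ²)( c/(c+‖θ̄'‖₂²) ) Σ − (2λ/σ²)( c/(c+‖θ̄'‖₂²)² ) Σ^{1/2} θ̄' θ̄'ᵀ Σ^{1/2}. -/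
open MeasureTheory Matrix

/-- Density of the `p`-dimensional centered Gaussian `N(0, S)` w.r.t. Lebesgue measure. -/
noncomputable def gaussPdf {p : ℕ} (S : Matrix (Fin p) (Fin p) ℝ) (x : Fin p → ℝ) : ℝ :=
  Real.exp (-(x ⬝ᵥ S⁻¹ *ᵥ x) / 2) / Real.sqrt ((2 * Real.pi) ^ p * S.det)

/-- Density of the one-dimensional Gaussian `N(m, s2)`. -/
noncomputable def gauss1 (m s2 y : ℝ) : ℝ :=
  Real.exp (-((y - m) ^ 2) / (2 * s2)) / Real.sqrt (2 * Real.pi * s2)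

section AuxLemmas

open Real

variable {p : ℕ}

lemma gauss1_pos {m s2 y : ℝ} (hs2 : 0 < s2) : 0 < gauss1 m s2 y := by
  apply div_pos (Real.exp_pos _)
  exact Real.sqrt_pos.2 (by positivity)

lemma integral_gauss1_rpow (a b s2 lam : ℝ) (hs2 : 0 < s2) :
    ∫ y : ℝ, gauss1 a s2 y ^ lam * gauss1 b s2 y ^ (1 - lam)
      = Real.exp (-(lam * (1 - lam) * (a - b) ^ 2) / (2 * s2)) := by
  have hK : (0:ℝ) < Real.sqrt (2 * Real.pi * s2) := Real.sqrt_pos.2 (by positivity)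
  have key : ∀ y : ℝ, gauss1 a s2 y ^ lam * gauss1 b s2 y ^ (1 - lam)
      = Real.exp (-(lam * (1 - lam) * (a - b) ^ 2) / (2 * s2)) *
        (Real.exp (-(y - (lam * a + (1 - lam) * b)) ^ 2 / (2 * s2)) / Real.sqrt (2 * Real.pi * s2)) := by
    intro y
    unfold gauss1
    rw [Real.div_rpow (Real.exp_pos _).le hK.le, Real.div_rpow (Real.exp_pos _).le hK.le,
      ← Real.exp_mul, ← Real.exp_mul, div_mul_div_comm, ← Real.exp_add,
      ← Real.rpow_add hK]
    rw [show lam + (1 - lam) = 1 by ring, Real.rpow_one, ← mul_div_assoc, ← Real.exp_add]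
    congr 1
    field_simp
    ring
  simp_rw [key]
  rw [MeasureTheory.integral_const_mul]
  have : ∫ y : ℝ, Real.exp (-(y - (lam * a + (1 - lam) * b)) ^ 2 / (2 * s2)) / Real.sqrt (2 * Real.pi * s2)
      = 1 := by
    rw [integral_div]
    have h1 : ∫ y : ℝ, Real.exp (-(y - (lam * a + (1 - lam) * b)) ^ 2 / (2 * s2))
        = ∫ y : ℝ, Real.exp (-(2*s2)⁻¹ * y ^ 2) := by
      rw [← integral_sub_right_eq_self (fun y => Real.exp (-(2*s2)⁻¹ * y ^ 2)) (lam * a + (1 - lam) * b)]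
      congr 1; ext y; congr 1; field_simp
    rw [h1, integral_gaussian]
    rw [div_eq_one_iff_eq hK.ne']
    rw [show π / (2*s2)⁻¹ = 2 * π * s2 by field_simp]
  rw [this, mul_one]

open scoped MatrixOrder in
lemma integral_exp_neg_quadForm (A : Matrix (Fin p) (Fin p) ℝ) (hA : A.PosDef) :
    ∫ x : Fin p → ℝ, Real.exp (-(x ⬝ᵥ A *ᵥ x) / 2) = Real.sqrt ((2 * π) ^ p / A.det) := by
  set B := CFC.sqrt A with hBdef
  have hBB : B * B = A := CFC.sqrt_mul_sqrt_self A hA.posSemidef.nonneg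
  have hBsym : Bᵀ = B := by
    have h := (CFC.sqrt_nonneg A).posSemidef.1
    rwa [Matrix.IsHermitian, Matrix.conjTranspose_eq_transpose_of_trivial] at h
  have hdet2 : B.det ^ 2 = A.det := by rw [← hBB, Matrix.det_mul, sq]
  have hAdet : 0 < A.det := hA.det_pos
  have hdB : B.det ≠ 0 := by
    intro h; rw [← hdet2, h] at hAdet; simp at hAdet
  have hquad : ∀ x : Fin p → ℝ, x ⬝ᵥ A *ᵥ x = (B *ᵥ x) ⬝ᵥ (B *ᵥ x) := by
    intro x
    rw [← hBB, ← Matrix.mulVec_mulVec, dotProduct_mulVec, ← Matrix.mulVec_transpose, hBsym]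
  simp_rw [hquad]
  have hcont : Continuous fun y : Fin p → ℝ => Real.exp (-(y ⬝ᵥ y) / 2) := by
    apply Real.continuous_exp.comp
    apply Continuous.div_const
    apply Continuous.neg
    exact continuous_finset_sum _ fun i _ => ((continuous_apply i).mul (continuous_apply i))
  have hlin : Continuous (Matrix.toLin' B) := LinearMap.continuous_on_pi _
  have hmap := Real.map_matrix_volume_pi_eq_smul_volume_pi (M := B) hdB
  have step1 : ∫ x : Fin p → ℝ, Real.exp (-((B *ᵥ x) ⬝ᵥ (B *ᵥ x)) / 2)
      = ∫ y : Fin p → ℝ, Real.exp (-(y ⬝ᵥ y) / 2) ∂(Measure.map (Matrix.toLin' B) volume) := by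
    rw [integral_map hlin.aemeasurable hcont.aestronglyMeasurable]
    simp [Matrix.toLin'_apply]
  rw [step1, hmap, integral_smul_measure]
  have hgauss : ∫ y : Fin p → ℝ, Real.exp (-(y ⬝ᵥ y) / 2) = Real.sqrt (2 * π) ^ p := by
    have : ∀ y : Fin p → ℝ, Real.exp (-(y ⬝ᵥ y) / 2) = ∏ i, Real.exp (-(2⁻¹ : ℝ) * (y i) ^ 2) := by
      intro y
      rw [← Real.exp_sum]
      congr 1
      rw [dotProduct, neg_div, Finset.sum_div, ← Finset.sum_neg_distrib]
      exact Finset.sum_congr rfl fun i _ => by ring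
    simp_rw [this]
    rw [MeasureTheory.volume_pi, MeasureTheory.integral_fintype_prod_eq_pow (ι := Fin p) (fun t : ℝ => Real.exp (-(2⁻¹:ℝ) * t ^ 2))]
    rw [integral_gaussian, show π / (2:ℝ)⁻¹ = 2 * π by field_simp, Fintype.card_fin]
  rw [hgauss]
  rw [ENNReal.toReal_ofReal (by positivity)]
  have habs : |B.det| = Real.sqrt A.det := by
    rw [← hdet2, Real.sqrt_sq_eq_abs]
  rw [smul_eq_mul, abs_inv, habs]
  have h2p : (0:ℝ) ≤ 2 * π := by positivity
  rw [Real.sqrt_div (by positivity : (0:ℝ) ≤ (2*π)^p)]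
  have : Real.sqrt ((2 * π) ^ p) = Real.sqrt (2 * π) ^ p := by
    rw [show (2*π)^p = (Real.sqrt (2*π) ^ p)^2 by
      rw [← pow_mul, mul_comm p 2, pow_mul, Real.sq_sqrt h2p]]
    exact Real.sqrt_sq (by positivity)
  rw [this, div_eq_inv_mul]

lemma vecMulVec_mulVec' (u x : Fin p → ℝ) :
    Matrix.vecMulVec u u *ᵥ x = (u ⬝ᵥ x) • u := by
  ext i
  simp [Matrix.mulVec, Matrix.vecMulVec, dotProduct, Finset.mul_sum, mul_comm, mul_assoc,
    mul_left_comm]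

lemma quad_vecMulVec (u x : Fin p → ℝ) :
    x ⬝ᵥ Matrix.vecMulVec u u *ᵥ x = (u ⬝ᵥ x) ^ 2 := by
  rw [vecMulVec_mulVec', dotProduct_smul, smul_eq_mul, dotProduct_comm]
  ring

lemma posSemidef_smul_vecMulVec (u : Fin p → ℝ) {c : ℝ} (hc : 0 ≤ c) :
    (c • Matrix.vecMulVec u u).PosSemidef := by
  refine Matrix.PosSemidef.of_dotProduct_mulVec_nonneg ?_ ?_
  · unfold Matrix.IsHermitian
    ext i j
    simp [Matrix.conjTranspose_apply, Matrix.vecMulVec, mul_comm]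
  · intro x
    have : star x = x := by simp
    rw [this, Matrix.smul_mulVec, dotProduct_smul, vecMulVec_mulVec',
      dotProduct_smul, smul_eq_mul, smul_eq_mul, dotProduct_comm]
    have h2 : (0:ℝ) ≤ (u ⬝ᵥ x) * (u ⬝ᵥ x) := mul_self_nonneg _
    nlinarith

lemma mul_vecMulVec (M : Matrix (Fin p) (Fin p) ℝ) (a b : Fin p → ℝ) :
    M * Matrix.vecMulVec a b = Matrix.vecMulVec (M *ᵥ a) b := by
  ext i j
  simp [Matrix.mul_apply, Matrix.vecMulVec, Matrix.mulVec, dotProduct,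
    Finset.sum_mul, mul_assoc]

lemma vecMulVec_mul (M : Matrix (Fin p) (Fin p) ℝ) (a b : Fin p → ℝ) :
    Matrix.vecMulVec a b * M = Matrix.vecMulVec a (Mᵀ *ᵥ b) := by
  ext i j
  simp only [Matrix.mul_apply, Matrix.vecMulVec_apply, Matrix.mulVec, dotProduct,
    Matrix.transpose_apply, Finset.mul_sum]
  exact Finset.sum_congr rfl fun k _ => by ring

lemma vecMulVec_mul_vecMulVec (a b c d : Fin p → ℝ) :
    Matrix.vecMulVec a b * Matrix.vecMulVec c d = (b ⬝ᵥ c) • Matrix.vecMulVec a d := by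
  ext i j
  simp only [Matrix.mul_apply, Matrix.vecMulVec_apply, Matrix.smul_apply, dotProduct,
    smul_eq_mul, Finset.sum_mul, Finset.mul_sum]
  exact Finset.sum_congr rfl fun k _ => by ring

lemma integral_exp_dot_gaussPdf (Sig : Matrix (Fin p) (Fin p) ℝ) (hSig : Sig.PosDef)
    (u : Fin p → ℝ) {c : ℝ} (hc : 0 < c) :
    ∫ x : Fin p → ℝ, Real.exp (-(u ⬝ᵥ x) ^ 2 / (2 * c)) * gaussPdf Sig x
      = Real.sqrt (c / (c + u ⬝ᵥ Sig *ᵥ u)) := by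
  set A := Sig⁻¹ + c⁻¹ • Matrix.vecMulVec u u with hAdef
  have hApos : A.PosDef := hSig.inv.add_posSemidef (posSemidef_smul_vecMulVec u (by positivity))
  have hv : 0 ≤ u ⬝ᵥ Sig *ᵥ u := by
    have := hSig.posSemidef.dotProduct_mulVec_nonneg u
    simpa using this
  have hSdet : 0 < Sig.det := hSig.det_pos
  have hSunit : IsUnit Sig.det := (isUnit_iff_ne_zero.2 hSdet.ne')
  have hmulvmv : ∀ (M : Matrix (Fin p) (Fin p) ℝ) (a b : Fin p → ℝ),
      M * Matrix.vecMulVec a b = Matrix.vecMulVec (M *ᵥ a) b := _root_.mul_vecMulVec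
  -- determinant of A
  have hdetA : A.det = (1 + c⁻¹ * (u ⬝ᵥ Sig *ᵥ u)) / Sig.det := by
    have h1 : A = Sig⁻¹ * (1 + Matrix.replicateCol Unit (c⁻¹ • (Sig *ᵥ u)) * Matrix.replicateRow Unit u) := by
      rw [Matrix.mul_add, Matrix.mul_one, hAdef]
      congr 1
      rw [← Matrix.vecMulVec_eq Unit, hmulvmv, Matrix.mulVec_smul, Matrix.mulVec_mulVec,
        Matrix.nonsing_inv_mul _ hSunit, Matrix.one_mulVec]
      ext i j
      simp [Matrix.vecMulVec]
      ring
    rw [h1, Matrix.det_mul, Matrix.det_one_add_replicateCol_mul_replicateRow, Matrix.det_nonsing_inv,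
      dotProduct_smul, Ring.inverse_eq_inv', smul_eq_mul]
    field_simp
  -- pointwise rewriting
  have hpt : ∀ x : Fin p → ℝ, Real.exp (-(u ⬝ᵥ x) ^ 2 / (2 * c)) * gaussPdf Sig x
      = Real.exp (-(x ⬝ᵥ A *ᵥ x) / 2) / Real.sqrt ((2 * π) ^ p * Sig.det) := by
    intro x
    unfold gaussPdf
    rw [← mul_div_assoc, ← Real.exp_add]
    congr 2
    rw [hAdef, Matrix.add_mulVec, dotProduct_add, Matrix.smul_mulVec,
      dotProduct_smul, quad_vecMulVec, smul_eq_mul]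
    field_simp
    ring
  simp_rw [hpt]
  rw [MeasureTheory.integral_div, integral_exp_neg_quadForm A hApos, hdetA]
  rw [← Real.sqrt_div' _ (by positivity)]
  congr 1
  have h2p : (0:ℝ) < (2*π)^p := by positivity
  field_simp

lemma sherman (Sig : Matrix (Fin p) (Fin p) ℝ) (hSig : Sig.PosDef) (u : Fin p → ℝ)
    {c : ℝ} (hc : 0 < c) :
    (Sig - (c + u ⬝ᵥ Sig *ᵥ u)⁻¹ • Matrix.vecMulVec (Sig *ᵥ u) (Sig *ᵥ u))⁻¹
      = Sig⁻¹ + c⁻¹ • Matrix.vecMulVec u u ∧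
    (Sig - (c + u ⬝ᵥ Sig *ᵥ u)⁻¹ • Matrix.vecMulVec (Sig *ᵥ u) (Sig *ᵥ u)).det
      = Sig.det * (c / (c + u ⬝ᵥ Sig *ᵥ u)) := by
  have hST : Sigᵀ = Sig := by
    simpa [Matrix.IsHermitian, Matrix.conjTranspose_eq_transpose_of_trivial] using hSig.1
  have hv : 0 ≤ u ⬝ᵥ Sig *ᵥ u := by simpa using hSig.posSemidef.dotProduct_mulVec_nonneg u
  set v := u ⬝ᵥ Sig *ᵥ u with hvdef
  have hcv : 0 < c + v := by linarith
  have hSunit : IsUnit Sig.det := isUnit_iff_ne_zero.2 hSig.det_pos.ne'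
  set A := Sig⁻¹ + c⁻¹ • Matrix.vecMulVec u u with hA
  set S' := Sig - (c + v)⁻¹ • Matrix.vecMulVec (Sig *ᵥ u) (Sig *ᵥ u) with hS'
  have hX1 : Sig⁻¹ * Matrix.vecMulVec (Sig *ᵥ u) (Sig *ᵥ u) = Matrix.vecMulVec u (Sig *ᵥ u) := by
    rw [_root_.mul_vecMulVec, Matrix.mulVec_mulVec, Matrix.nonsing_inv_mul _ hSunit, Matrix.one_mulVec]
  have hX2 : Matrix.vecMulVec u u * Sig = Matrix.vecMulVec u (Sig *ᵥ u) := by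
    rw [_root_.vecMulVec_mul, hST]
  have hX3 : Matrix.vecMulVec u u * Matrix.vecMulVec (Sig *ᵥ u) (Sig *ᵥ u)
      = v • Matrix.vecMulVec u (Sig *ᵥ u) := by
    rw [_root_.vecMulVec_mul_vecMulVec, hvdef]
  have hmul : A * S' = 1 := by
    rw [hA, hS', Matrix.add_mul, Matrix.mul_sub, Matrix.mul_sub,
      Matrix.nonsing_inv_mul _ hSunit, Matrix.mul_smul, hX1, Matrix.smul_mul, hX2,
      Matrix.mul_smul, Matrix.smul_mul, hX3, smul_smul, smul_smul]
    have hco : -( (c+v)⁻¹ ) + c⁻¹ - (c+v)⁻¹ * c⁻¹ * v = 0 := by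
      field_simp
      ring
    have : (1 : Matrix (Fin p) (Fin p) ℝ) - (c + v)⁻¹ • Matrix.vecMulVec u (Sig *ᵥ u)
        + (c⁻¹ • Matrix.vecMulVec u (Sig *ᵥ u)
          - ((c+v)⁻¹ * c⁻¹ * v) • Matrix.vecMulVec u (Sig *ᵥ u))
        = 1 + (-( (c+v)⁻¹ ) + c⁻¹ - (c+v)⁻¹ * c⁻¹ * v) • Matrix.vecMulVec u (Sig *ᵥ u) := by
      module
    rw [this, hco, zero_smul, add_zero]
  have hinv : S'⁻¹ = A := Matrix.inv_eq_left_inv hmul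
  refine ⟨hinv, ?_⟩
  have hdetA : A.det = (1 + c⁻¹ * v) / Sig.det := by
    have h1 : A = Sig⁻¹ * (1 + Matrix.replicateCol Unit (c⁻¹ • (Sig *ᵥ u)) * Matrix.replicateRow Unit u) := by
      rw [Matrix.mul_add, Matrix.mul_one, hA]
      congr 1
      rw [← Matrix.vecMulVec_eq Unit, _root_.mul_vecMulVec, Matrix.mulVec_smul, Matrix.mulVec_mulVec,
        Matrix.nonsing_inv_mul _ hSunit, Matrix.one_mulVec]
      ext i j
      simp [Matrix.vecMulVec]
      ring
    rw [h1, Matrix.det_mul, Matrix.det_one_add_replicateCol_mul_replicateRow, Matrix.det_nonsing_inv,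
      dotProduct_smul, Ring.inverse_eq_inv', smul_eq_mul]
    field_simp
    rw [← hvdef]
  have hdetmul : A.det * S'.det = 1 := by rw [← Matrix.det_mul, hmul, Matrix.det_one]
  have hAdet_ne : A.det ≠ 0 := by
    intro h; rw [h, zero_mul] at hdetmul; exact one_ne_zero hdetmul.symm
  have : S'.det = A.det⁻¹ := by field_simp at hdetmul ⊢; linarith [hdetmul]
  rw [this, hdetA]
  have h2 : 1 + c⁻¹ * v = (c + v) / c := by field_simp
  rw [h2, inv_div, div_eq_mul_inv, inv_div, mul_comm]

noncomputable def dotCLM (a : Fin p → ℝ) : (Fin p → ℝ) →L[ℝ] ℝ :=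
  ∑ i, a i • (ContinuousLinearMap.proj i : (Fin p → ℝ) →L[ℝ] ℝ)

lemma dotCLM_apply (a w : Fin p → ℝ) : dotCLM a w = a ⬝ᵥ w := by
  simp [dotCLM, dotProduct, ContinuousLinearMap.sum_apply]

lemma hasFDerivAt_linform (a : Fin p → ℝ) (b : ℝ) (t : Fin p → ℝ) :
    HasFDerivAt (fun s : Fin p → ℝ => a ⬝ᵥ s + b) (dotCLM a) t := by
  have : HasFDerivAt (fun s : Fin p → ℝ => a ⬝ᵥ s) (dotCLM a) t := by
    simp_rw [dotProduct]
    have h : ∀ i : Fin p, HasFDerivAt (fun s : Fin p → ℝ => a i * s i)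
        (a i • (ContinuousLinearMap.proj i : (Fin p → ℝ) →L[ℝ] ℝ)) t := by
      intro i
      exact (hasFDerivAt_apply i t).const_mul (a i)
    simpa [dotCLM] using HasFDerivAt.fun_sum (fun i _ => h i)
  simpa using this.add_const b

lemma hasFDerivAt_quad (Sig : Matrix (Fin p) (Fin p) ℝ) (hsym : ∀ i j, Sig i j = Sig j i)
    (θstar : Fin p → ℝ) (t : Fin p → ℝ) :
    HasFDerivAt (fun s : Fin p → ℝ => (s - θstar) ⬝ᵥ Sig *ᵥ (s - θstar))
      ((2 : ℝ) • dotCLM (Sig *ᵥ (t - θstar))) t := by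
  have hre : ∀ s : Fin p → ℝ, (s - θstar) ⬝ᵥ Sig *ᵥ (s - θstar)
      = ∑ i, (s i - θstar i) * ((fun j => Sig i j) ⬝ᵥ s + -((fun j => Sig i j) ⬝ᵥ θstar)) := by
    intro s
    simp only [dotProduct, Matrix.mulVec, Pi.sub_apply, sub_eq_add_neg, Finset.mul_sum,
      neg_mul, mul_neg, ← Finset.sum_neg_distrib, ← Finset.sum_add_distrib]
    refine Finset.sum_congr rfl fun i _ => Finset.sum_congr rfl fun j _ => by ring
  have hterm : ∀ i : Fin p, HasFDerivAt
      (fun s : Fin p → ℝ => (s i - θstar i) * ((fun j => Sig i j) ⬝ᵥ s + -((fun j => Sig i j) ⬝ᵥ θstar)))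
      ((t i - θstar i) • dotCLM (fun j => Sig i j)
        + ((fun j => Sig i j) ⬝ᵥ t + -((fun j => Sig i j) ⬝ᵥ θstar)) • (ContinuousLinearMap.proj i)) t := by
    intro i
    have h1 : HasFDerivAt (fun s : Fin p → ℝ => s i - θstar i)
        (ContinuousLinearMap.proj i : (Fin p → ℝ) →L[ℝ] ℝ) t := by
      simpa using (hasFDerivAt_apply i t).sub_const (θstar i)
    have h2 := hasFDerivAt_linform (fun j => Sig i j) (-((fun j => Sig i j) ⬝ᵥ θstar)) t
    exact h1.mul h2
  have := HasFDerivAt.fun_sum (fun i (_ : i ∈ Finset.univ) => hterm i)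
  have heq : (fun s : Fin p → ℝ => (s - θstar) ⬝ᵥ Sig *ᵥ (s - θstar))
      = fun s => ∑ i, (s i - θstar i) * ((fun j => Sig i j) ⬝ᵥ s + -((fun j => Sig i j) ⬝ᵥ θstar)) :=
    funext hre
  rw [heq]
  refine this.congr_fderiv ?_
  symm
  ext w
  simp only [ContinuousLinearMap.sum_apply, ContinuousLinearMap.add_apply,
    ContinuousLinearMap.smul_apply, ContinuousLinearMap.proj_apply, ContinuousLinearMap.coe_smul',
    Pi.smul_apply, dotCLM_apply, smul_eq_mul]
  have hlhs : 2 * ((Sig *ᵥ (t - θstar)) ⬝ᵥ w)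
      = ∑ i, ((t i - θstar i) * ((fun j => Sig i j) ⬝ᵥ w)
        + ((fun j => Sig i j) ⬝ᵥ t + -((fun j => Sig i j) ⬝ᵥ θstar)) * w i) := by
    have hswap : (Sig *ᵥ (t - θstar)) ⬝ᵥ w = ∑ i, (t i - θstar i) * ((fun j => Sig i j) ⬝ᵥ w) := by
      simp only [dotProduct, Matrix.mulVec, Finset.sum_mul, Finset.mul_sum, Pi.sub_apply]
      rw [Finset.sum_comm]
      refine Finset.sum_congr rfl fun i _ => Finset.sum_congr rfl fun j _ => ?_
      rw [hsym j i]; ring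
    have h2 : (Sig *ᵥ (t - θstar)) ⬝ᵥ w = ∑ i, ((fun j => Sig i j) ⬝ᵥ t + -((fun j => Sig i j) ⬝ᵥ θstar)) * w i := by
      simp only [dotProduct, Matrix.mulVec, Pi.sub_apply]
      refine Finset.sum_congr rfl fun i _ => ?_
      congr 1
      rw [← Finset.sum_neg_distrib, ← Finset.sum_add_distrib]
      exact Finset.sum_congr rfl fun j _ => by ring
    rw [two_mul]
    nth_rewrite 1 [hswap]
    nth_rewrite 1 [h2]
    rw [← Finset.sum_add_distrib]
  simpa using hlhs

section Deriv
variable (Sig : Matrix (Fin p) (Fin p) ℝ) (θstar : Fin p → ℝ) (c lam : ℝ)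

lemma hasFDerivAt_Dc (hsym : ∀ i j, Sig i j = Sig j i) (t : Fin p → ℝ)
    (hne : c + (t - θstar) ⬝ᵥ Sig *ᵥ (t - θstar) ≠ 0) :
    HasFDerivAt (fun s : Fin p → ℝ =>
        (1/(2*(1-lam))) * (Real.log (c + (s - θstar) ⬝ᵥ Sig *ᵥ (s - θstar)) - Real.log c))
      (((1/(1-lam)) * (c + (t - θstar) ⬝ᵥ Sig *ᵥ (t - θstar))⁻¹) • dotCLM (Sig *ᵥ (t - θstar))) t := by
  have h1 : HasFDerivAt (fun s : Fin p → ℝ => c + (s - θstar) ⬝ᵥ Sig *ᵥ (s - θstar))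
      ((2:ℝ) • dotCLM (Sig *ᵥ (t - θstar))) t :=
    (hasFDerivAt_quad Sig hsym θstar t).const_add c
  have h3 := ((h1.log hne).sub_const (Real.log c)).const_mul (1/(2*(1-lam)))
  refine h3.congr_fderiv ?_
  symm
  rw [smul_smul, smul_smul]
  congr 1
  rw [show (2:ℝ) * (1 - lam) = 2 - lam * 2 by ring] at *
  rw [show (1:ℝ) / (2 - lam * 2) = (2 - lam*2)⁻¹ by ring, show (1:ℝ)/(1-lam) = (1-lam)⁻¹ by ring,
    show (2:ℝ) - lam * 2 = 2 * (1 - lam) by ring, mul_inv]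
  ring

lemma fderiv_Dc_single (hsym : ∀ i j, Sig i j = Sig j i) (t : Fin p → ℝ)
    (hne : c + (t - θstar) ⬝ᵥ Sig *ᵥ (t - θstar) ≠ 0) (l : Fin p) :
    fderiv ℝ (fun s : Fin p → ℝ =>
        (1/(2*(1-lam))) * (Real.log (c + (s - θstar) ⬝ᵥ Sig *ᵥ (s - θstar)) - Real.log c))
      t (Pi.single l 1)
      = (1/(1-lam)) * (c + (t - θstar) ⬝ᵥ Sig *ᵥ (t - θstar))⁻¹ * (Sig *ᵥ (t - θstar)) l := by
  rw [(hasFDerivAt_Dc Sig θstar c lam hsym t hne).fderiv]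
  rw [ContinuousLinearMap.smul_apply, dotCLM_apply, smul_eq_mul]
  rw [dotProduct_single]
  ring

lemma fderiv_G_single (hsym : ∀ i j, Sig i j = Sig j i) (t : Fin p → ℝ)
    (hne : c + (t - θstar) ⬝ᵥ Sig *ᵥ (t - θstar) ≠ 0) (j l : Fin p) :
    fderiv ℝ (fun s : Fin p → ℝ =>
        ((1/(1-lam)) * (c + (s - θstar) ⬝ᵥ Sig *ᵥ (s - θstar))⁻¹)
          * ((fun k => Sig l k) ⬝ᵥ s + -((fun k => Sig l k) ⬝ᵥ θstar)))
      t (Pi.single j 1)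
      = (1/(1-lam)) * (c + (t - θstar) ⬝ᵥ Sig *ᵥ (t - θstar))⁻¹ * Sig l j
        - ((fun k => Sig l k) ⬝ᵥ t + -((fun k => Sig l k) ⬝ᵥ θstar))
          * ((1/(1-lam)) * (((c + (t - θstar) ⬝ᵥ Sig *ᵥ (t - θstar))^2)⁻¹
            * (2 * (Sig *ᵥ (t - θstar)) j)) ) := by
  have h1 : HasFDerivAt (fun s : Fin p → ℝ => c + (s - θstar) ⬝ᵥ Sig *ᵥ (s - θstar))
      ((2:ℝ) • dotCLM (Sig *ᵥ (t - θstar))) t :=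
    (hasFDerivAt_quad Sig hsym θstar t).const_add c
  have hinv : HasFDerivAt (fun s : Fin p → ℝ => (c + (s - θstar) ⬝ᵥ Sig *ᵥ (s - θstar))⁻¹)
      ((-(((c + (t - θstar) ⬝ᵥ Sig *ᵥ (t - θstar))^2)⁻¹)) • ((2:ℝ) • dotCLM (Sig *ᵥ (t - θstar)))) t := by
    have h := (hasDerivAt_inv hne).comp_hasFDerivAt t h1
    exact h
  have ha := hinv.const_mul (1/(1-lam))
  have hb := hasFDerivAt_linform (fun k => Sig l k) (-((fun k => Sig l k) ⬝ᵥ θstar)) t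
  have hab := ha.fun_mul hb
  rw [hab.fderiv]
  simp only [ContinuousLinearMap.add_apply, ContinuousLinearMap.smul_apply, smul_eq_mul,
    dotCLM_apply, dotProduct_single, ContinuousLinearMap.coe_smul', Pi.smul_apply]
  ring
end Deriv

lemma dot_sym (M : Matrix (Fin p) (Fin p) ℝ) (hM : ∀ i j, M i j = M j i) (a b : Fin p → ℝ) :
    (M *ᵥ a) ⬝ᵥ b = a ⬝ᵥ (M *ᵥ b) := by
  simp only [dotProduct, Matrix.mulVec, Finset.sum_mul, Finset.mul_sum]
  rw [Finset.sum_comm]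
  refine Finset.sum_congr rfl fun i _ => Finset.sum_congr rfl fun j _ => ?_
  rw [hM j i]; ring

end AuxLemmas

/-- Lemma 5, Gaussian case: with `q*(x) = N(x|0,Σ)`,
`p*(y|x) = N(y|xᵀθ*,σ²)`, `p_θ(y|x) = N(y|xᵀθ,σ²)`, `θ̄' = Σ^{1/2}(θ−θ*)`,
`c = σ²/(λ(1−λ))`, and `q^λ_θ` the x-marginal of the tilted distribution
`p̄^λ_θ ∝ q* p*^λ p_θ^{1−λ}`:
(i) `q^λ_θ = N(0, Σ^λ_θ)` with `Σ^λ_θ = Σ − Σ^{1/2}θ̄'θ̄'ᵀΣ^{1/2}/(c+‖θ̄'‖²)`;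
(ii) `∂d_λ(p*,p_θ)/∂θ = (λ/σ²)(c/(c+‖θ̄'‖²)) Σ^{1/2}θ̄'`;
(iii) `∂²d_λ(p*,p_θ)/∂θ∂θᵀ = (λ/σ²)(c/(c+‖θ̄'‖²)) Σ`
`      − (2λ/σ²)(c/(c+‖θ̄'‖²)²) Σ^{1/2}θ̄'θ̄'ᵀΣ^{1/2}`.
Here `R = Σ^{1/2}` is the positive semidefinite square root of `Σ`. -/
theorem stmt_12 (p : ℕ)
    (Sig R : Matrix (Fin p) (Fin p) ℝ) (hSig : Sig.PosDef)
    (hR : R.PosSemidef) (hRsq : R * R = Sig)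
    (s2 lam : ℝ) (hs2 : 0 < s2) (hlam : lam ∈ Set.Ioo (0 : ℝ) 1)
    (θstar θ : Fin p → ℝ)
    (c : ℝ) (hc : c = s2 / (lam * (1 - lam)))
    (tb : Fin p → ℝ) (htb : tb = R *ᵥ (θ - θstar))
    (Z : (Fin p → ℝ) → ℝ)
    (hZ : ∀ t, Z t = ∫ x : Fin p → ℝ,
      (∫ y : ℝ, gauss1 (x ⬝ᵥ θstar) s2 y ^ lam * gauss1 (x ⬝ᵥ t) s2 y ^ (1 - lam)) *
        gaussPdf Sig x)
    (D : (Fin p → ℝ) → ℝ)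
    (hD : ∀ t, D t = -(1 / (1 - lam)) * Real.log (∫ x : Fin p → ℝ,
      (∫ y : ℝ, (gauss1 (x ⬝ᵥ t) s2 y / gauss1 (x ⬝ᵥ θstar) s2 y) ^ (1 - lam) *
        gauss1 (x ⬝ᵥ θstar) s2 y) * gaussPdf Sig x)) :
    (∀ x : Fin p → ℝ,
      (∫ y : ℝ, gaussPdf Sig x * gauss1 (x ⬝ᵥ θstar) s2 y ^ lam *
          gauss1 (x ⬝ᵥ θ) s2 y ^ (1 - lam)) / Z θ =
        gaussPdf (Sig - (c + tb ⬝ᵥ tb)⁻¹ • (R * Matrix.vecMulVec tb tb * R)) x) ∧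
    (∀ j, fderiv ℝ D θ (Pi.single j 1) =
      (lam / s2) * (c / (c + tb ⬝ᵥ tb)) * (R *ᵥ tb) j) ∧
    (∀ j l, fderiv ℝ (fun t => fderiv ℝ D t (Pi.single l 1)) θ (Pi.single j 1) =
      (lam / s2) * (c / (c + tb ⬝ᵥ tb)) * Sig j l -
        (2 * lam / s2) * (c / (c + tb ⬝ᵥ tb) ^ 2) * ((R *ᵥ tb) j * (R *ᵥ tb) l)) := by
  obtain ⟨hl0, hl1⟩ := hlam
  have h1m : (0:ℝ) < 1 - lam := by linarith
  have hcpos : 0 < c := by rw [hc]; positivity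
  have hST : Sigᵀ = Sig := by
    simpa [Matrix.IsHermitian, Matrix.conjTranspose_eq_transpose_of_trivial] using hSig.1
  have hsym : ∀ i j, Sig i j = Sig j i := fun i j => by
    simpa using congrFun (congrFun hST j) i
  have hRT : Rᵀ = R := by
    simpa [Matrix.IsHermitian, Matrix.conjTranspose_eq_transpose_of_trivial] using hR.1
  have hRsym : ∀ i j, R i j = R j i := fun i j => by
    simpa using congrFun (congrFun hRT j) i
  have hRtb : R *ᵥ tb = Sig *ᵥ (θ - θstar) := by
    rw [htb, Matrix.mulVec_mulVec, hRsq]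
  have htbtb : tb ⬝ᵥ tb = (θ - θstar) ⬝ᵥ Sig *ᵥ (θ - θstar) := by
    rw [htb, dot_sym R hRsym, Matrix.mulVec_mulVec, hRsq]
  have hqt : ∀ t : Fin p → ℝ, 0 ≤ (t - θstar) ⬝ᵥ Sig *ᵥ (t - θstar) := fun t => by
    simpa using hSig.posSemidef.dotProduct_mulVec_nonneg (t - θstar)
  have hnet : ∀ t : Fin p → ℝ, 0 < c + (t - θstar) ⬝ᵥ Sig *ᵥ (t - θstar) := fun t => by
    have := hqt t; linarith
  -- inner integral
  have hinner : ∀ (t x : Fin p → ℝ),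
      (∫ y : ℝ, gauss1 (x ⬝ᵥ θstar) s2 y ^ lam * gauss1 (x ⬝ᵥ t) s2 y ^ (1 - lam))
        = Real.exp (-((t - θstar) ⬝ᵥ x) ^ 2 / (2 * c)) := by
    intro t x
    rw [integral_gauss1_rpow _ _ _ _ hs2]
    congr 1
    have hab : x ⬝ᵥ θstar - x ⬝ᵥ t = -((t - θstar) ⬝ᵥ x) := by
      rw [dotProduct_comm (t - θstar) x, dotProduct_sub]
      ring
    rw [hab, neg_sq, hc]
    field_simp
  have key : ∀ t : Fin p → ℝ,
      (∫ x : Fin p → ℝ,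
        (∫ y : ℝ, gauss1 (x ⬝ᵥ θstar) s2 y ^ lam * gauss1 (x ⬝ᵥ t) s2 y ^ (1 - lam)) *
          gaussPdf Sig x)
        = Real.sqrt (c / (c + (t - θstar) ⬝ᵥ Sig *ᵥ (t - θstar))) := by
    intro t
    calc (∫ x : Fin p → ℝ,
        (∫ y : ℝ, gauss1 (x ⬝ᵥ θstar) s2 y ^ lam * gauss1 (x ⬝ᵥ t) s2 y ^ (1 - lam)) *
          gaussPdf Sig x)
        = ∫ x : Fin p → ℝ, Real.exp (-((t - θstar) ⬝ᵥ x) ^ 2 / (2 * c)) * gaussPdf Sig x := by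
          simp only [hinner]
      _ = _ := integral_exp_dot_gaussPdf Sig hSig _ hcpos
  have hZt : Z θ = Real.sqrt (c / (c + tb ⬝ᵥ tb)) := by
    rw [hZ, key, htbtb]
  -- closed form for D
  have hDfun : D = fun t => (1/(2*(1-lam))) *
      (Real.log (c + (t - θstar) ⬝ᵥ Sig *ᵥ (t - θstar)) - Real.log c) := by
    funext t
    rw [hD t]
    have hpt2 : ∀ (x : Fin p → ℝ) (y : ℝ),
        (gauss1 (x ⬝ᵥ t) s2 y / gauss1 (x ⬝ᵥ θstar) s2 y) ^ (1 - lam) *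
          gauss1 (x ⬝ᵥ θstar) s2 y
          = gauss1 (x ⬝ᵥ θstar) s2 y ^ lam * gauss1 (x ⬝ᵥ t) s2 y ^ (1 - lam) := by
      intro x y
      have hA := gauss1_pos (m := x ⬝ᵥ θstar) (s2 := s2) (y := y) hs2
      have hB := gauss1_pos (m := x ⬝ᵥ t) (s2 := s2) (y := y) hs2
      have h2 : gauss1 (x ⬝ᵥ θstar) s2 y ^ lam * gauss1 (x ⬝ᵥ θstar) s2 y ^ (1 - lam)
          = gauss1 (x ⬝ᵥ θstar) s2 y := by
        rw [← Real.rpow_add hA]; norm_num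
      calc (gauss1 (x ⬝ᵥ t) s2 y / gauss1 (x ⬝ᵥ θstar) s2 y) ^ (1 - lam) *
            gauss1 (x ⬝ᵥ θstar) s2 y
          = (gauss1 (x ⬝ᵥ t) s2 y ^ (1 - lam) / gauss1 (x ⬝ᵥ θstar) s2 y ^ (1 - lam)) *
            (gauss1 (x ⬝ᵥ θstar) s2 y ^ lam * gauss1 (x ⬝ᵥ θstar) s2 y ^ (1 - lam)) := by
            rw [Real.div_rpow hB.le hA.le, h2]
        _ = gauss1 (x ⬝ᵥ θstar) s2 y ^ lam * gauss1 (x ⬝ᵥ t) s2 y ^ (1 - lam) := by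
            have hne : gauss1 (x ⬝ᵥ θstar) s2 y ^ (1 - lam) ≠ 0 :=
              (Real.rpow_pos_of_pos hA _).ne'
            field_simp
    simp only [hpt2]
    rw [key t]
    have hq := hqt t
    have hcq := hnet t
    rw [Real.log_sqrt (by positivity), Real.log_div hcpos.ne' hcq.ne']
    rw [show (1:ℝ)/(2*(1-lam)) = 2⁻¹ * (1-lam)⁻¹ by rw [one_div, mul_inv]]
    ring
  have hfrac : lam / s2 * c = 1 / (1 - lam) := by
    rw [hc]
    field_simp
  refine ⟨?_, ?_, ?_⟩
  · -- part (i)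
    intro x
    have hy : (∫ y : ℝ, gaussPdf Sig x * gauss1 (x ⬝ᵥ θstar) s2 y ^ lam *
          gauss1 (x ⬝ᵥ θ) s2 y ^ (1 - lam))
        = gaussPdf Sig x * Real.exp (-((θ - θstar) ⬝ᵥ x) ^ 2 / (2 * c)) := by
      simp_rw [mul_assoc]
      rw [MeasureTheory.integral_const_mul, hinner θ x]
    rw [hy, hZt]
    obtain ⟨hSinv, hSdet⟩ := sherman Sig hSig (θ - θstar) hcpos
    have hMeq : Sig - (c + tb ⬝ᵥ tb)⁻¹ • (R * Matrix.vecMulVec tb tb * R)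
        = Sig - (c + (θ - θstar) ⬝ᵥ Sig *ᵥ (θ - θstar))⁻¹ •
            Matrix.vecMulVec (Sig *ᵥ (θ - θstar)) (Sig *ᵥ (θ - θstar)) := by
      rw [htbtb]
      congr 2
      rw [_root_.mul_vecMulVec, _root_.vecMulVec_mul, hRT, hRtb]
    rw [hMeq]
    unfold gaussPdf
    rw [hSinv, hSdet]
    have hqd : x ⬝ᵥ (Sig⁻¹ + c⁻¹ • Matrix.vecMulVec (θ - θstar) (θ - θstar)) *ᵥ x
        = x ⬝ᵥ Sig⁻¹ *ᵥ x + c⁻¹ * ((θ - θstar) ⬝ᵥ x) ^ 2 := by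
      rw [Matrix.add_mulVec, dotProduct_add, Matrix.smul_mulVec,
        dotProduct_smul, quad_vecMulVec, smul_eq_mul]
    rw [hqd]
    rw [div_mul_eq_mul_div, div_div, ← Real.exp_add]
    have hq := hqt θ
    have hcq := hnet θ
    have hSd := hSig.det_pos
    congr 1
    · field_simp
      ring
    · rw [htbtb, ← Real.sqrt_mul (by positivity : (0:ℝ) ≤ (2 * Real.pi) ^ p * Sig.det)]
      congr 1
      ring
  · -- part (ii)
    intro j
    rw [hDfun, fderiv_Dc_single Sig θstar c lam hsym θ (hnet θ).ne' j, hRtb, htbtb]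
    rw [show lam / s2 * (c / (c + (θ - θstar) ⬝ᵥ Sig *ᵥ (θ - θstar)))
        = (lam / s2 * c) * (c + (θ - θstar) ⬝ᵥ Sig *ᵥ (θ - θstar))⁻¹ by ring, hfrac]
  · -- part (iii)
    intro j l
    have hN : ∀ t : Fin p → ℝ, (Sig *ᵥ (t - θstar)) l
        = (fun k => Sig l k) ⬝ᵥ t + -((fun k => Sig l k) ⬝ᵥ θstar) := by
      intro t
      simp only [Matrix.mulVec, dotProduct, Pi.sub_apply]
      rw [← Finset.sum_neg_distrib, ← Finset.sum_add_distrib]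
      exact Finset.sum_congr rfl fun k _ => by ring
    have hfun : (fun t => fderiv ℝ D t (Pi.single l 1))
        = fun t : Fin p → ℝ => ((1/(1-lam)) * (c + (t - θstar) ⬝ᵥ Sig *ᵥ (t - θstar))⁻¹)
            * ((fun k => Sig l k) ⬝ᵥ t + -((fun k => Sig l k) ⬝ᵥ θstar)) := by
      funext t
      rw [hDfun, fderiv_Dc_single Sig θstar c lam hsym t (hnet t).ne' l, hN t]
    rw [hfun, fderiv_G_single Sig θstar c lam hsym θ (hnet θ).ne' j l]
    rw [← hN θ, hRtb, htbtb, hsym j l]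
    rw [show lam / s2 * (c / (c + (θ - θstar) ⬝ᵥ Sig *ᵥ (θ - θstar)))
        = (lam / s2 * c) * (c + (θ - θstar) ⬝ᵥ Sig *ᵥ (θ - θstar))⁻¹ by ring, hfrac]
    rw [show 2 * lam / s2 * (c / (c + (θ - θstar) ⬝ᵥ Sig *ᵥ (θ - θstar)) ^ 2)
        = 2 * (lam / s2 * c) * (((c + (θ - θstar) ⬝ᵥ Sig *ᵥ (θ - θstar)))^2)⁻¹ by ring, hfrac]
    ring
end

section
/- Let X be a real random variable with density p_θ(x) = exp(θx − ψ(θ)) belonging to a one-dimensional natural exponential family, with expectation parameter η = E_{p_θ}[X] = ψ'(θ). Let θ' be another natural parameter with expectation parameter η' = ψ'(θ'), and let D(θ',θ) = (θ'−θ)η' − ψ(θ') + ψ(θ) denote the KL divergence from p_{θ'} to p_θ. Then: if η' ≥ η, Pr_θ( X ≥ η' ) ≤ exp( −D(θ',θ) ); and if η' ≤ η, Pr_θ( X ≤ η' ) ≤ exp( −D(θ',θ) ). -/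
open MeasureTheory

/-- Lemma 8: Sanov-type / Chernoff inequality for one-dimensional natural
exponential families.

`p_t(x) = exp(t x − ψ(t))` is a density w.r.t. the base measure `ν`, `η(t)` is the
expectation parameter corresponding to the natural parameter `t` (the map `t ↦ η(t)`
is monotone increasing), and
`D(θ',θ) = (θ'−θ)η(θ') − ψ(θ') + ψ(θ)` is the KL divergence from `p_{θ'}` to `p_θ`.
Then `Pr_θ(X ≥ η(θ')) ≤ exp(−D(θ',θ))` when `η(θ') ≥ η(θ)`, and
`Pr_θ(X ≤ η(θ')) ≤ exp(−D(θ',θ))` when `η(θ') ≤ η(θ)`. -/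
theorem stmt_17 (ν : Measure ℝ) (ψ : ℝ → ℝ)
    (hnorm : ∀ t : ℝ, ∫ x, Real.exp (t * x - ψ t) ∂ν = 1)
    (η : ℝ → ℝ)
    (hη : ∀ t : ℝ, η t = ∫ x, x * Real.exp (t * x - ψ t) ∂ν)
    (hmono : StrictMono η)
    (θ θ' : ℝ) :
    (η θ ≤ η θ' →
      (∫ x in {x : ℝ | η θ' ≤ x}, Real.exp (θ * x - ψ θ) ∂ν) ≤
        Real.exp (-((θ' - θ) * η θ' - ψ θ' + ψ θ))) ∧
    (η θ' ≤ η θ →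
      (∫ x in {x : ℝ | x ≤ η θ'}, Real.exp (θ * x - ψ θ) ∂ν) ≤
        Real.exp (-((θ' - θ) * η θ' - ψ θ' + ψ θ))) := by
  have hint : ∀ t : ℝ, Integrable (fun x => Real.exp (t * x - ψ t)) ν := by
    intro t
    by_contra h
    have h1 := hnorm t
    rw [integral_undef h] at h1
    norm_num at h1
  have key : ∀ S : Set ℝ, MeasurableSet S → (∀ x ∈ S, 0 ≤ (θ' - θ) * (x - η θ')) →
      (∫ x in S, Real.exp (θ * x - ψ θ) ∂ν) ≤
        Real.exp (-((θ' - θ) * η θ' - ψ θ' + ψ θ)) := by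
    intro S hS hpt
    have step1 : (∫ x in S, Real.exp (θ * x - ψ θ) ∂ν) ≤
        ∫ x in S, Real.exp (-((θ' - θ) * η θ' - ψ θ' + ψ θ)) * Real.exp (θ' * x - ψ θ') ∂ν := by
      apply setIntegral_mono_on ((hint θ).restrict) (((hint θ').restrict).const_mul _) hS
      intro x hx
      rw [← Real.exp_add]
      apply Real.exp_le_exp.mpr
      have := hpt x hx
      nlinarith
    have step2 : (∫ x in S, Real.exp (-((θ' - θ) * η θ' - ψ θ' + ψ θ)) *
        Real.exp (θ' * x - ψ θ') ∂ν) =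
        Real.exp (-((θ' - θ) * η θ' - ψ θ' + ψ θ)) *
          ∫ x in S, Real.exp (θ' * x - ψ θ') ∂ν := by
      rw [integral_const_mul]
    have step3 : (∫ x in S, Real.exp (θ' * x - ψ θ') ∂ν) ≤ 1 := by
      rw [← hnorm θ']
      exact setIntegral_le_integral (hint θ')
        (Filter.Eventually.of_forall fun x => (Real.exp_pos _).le)
    calc (∫ x in S, Real.exp (θ * x - ψ θ) ∂ν) ≤ _ := step1
      _ = _ := step2
      _ ≤ Real.exp (-((θ' - θ) * η θ' - ψ θ' + ψ θ)) * 1 := by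
          exact mul_le_mul_of_nonneg_left step3 (Real.exp_pos _).le
      _ = _ := mul_one _
  constructor
  · intro hle
    have hθ : θ ≤ θ' := hmono.le_iff_le.mp hle
    exact key _ measurableSet_Ici fun x hx =>
      mul_nonneg (by linarith) (by simpa [Set.mem_setOf_eq] using sub_nonneg.mpr (show η θ' ≤ x from hx))
  · intro hle
    have hθ : θ' ≤ θ := hmono.le_iff_le.mp hle
    refine key _ measurableSet_Iic fun x hx => ?_
    have hx' : x ≤ η θ' := hx
    nlinarith
end
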